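/- Let Ω be a domain in 𝕃, let w_{ττ'} > 0 be a constant, and let w_τ, w̃_τ : E_Ω → (0,∞) be edge weights with w_τ(e) ≤ w̃_τ(e) for every e ∈ E_Ω. Then ATRC^{0,𝟙}_{Ω,w_τ,w_{ττ'}} is stochastically dominated by ATRC^{0,𝟙}_{Ω,w̃_τ,w_{ττ'}} with respect to the coordinatewise partial order on pairs (ω_τ,ω_{ττ'}). -/

import Mathlib

open scoped Classical BigOperators

noncomputable section

namespace ATRCPaper

/-- A vertex of the lattice `𝕃` (even coordinate sum). -/
def isLV (p : ℤ × ℤ) : Prop := (p.1 + p.2) % 2 = 0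

/-- Diagonal adjacency in `ℤ²`. -/
def adjL (u v : ℤ × ℤ) : Prop := (u.1 - v.1).natAbs = 1 ∧ (u.2 - v.2).natAbs = 1

/-- The lattice `𝕃` as a graph on `ℤ²`. -/
def LGraph : SimpleGraph (ℤ × ℤ) where
  Adj u v := isLV u ∧ isLV v ∧ adjL u v
  symm := by
    constructor
    rintro u v ⟨h1, h2, h3, h4⟩
    refine ⟨h2, h1, ?_, ?_⟩ <;> omega
  loopless := by
    constructor
    rintro u ⟨-, -, h, -⟩
    omega

/-- A finite subgraph of `𝕃`. -/
structure FinSubL where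
  verts : Finset (ℤ × ℤ)
  edges : Finset (Sym2 (ℤ × ℤ))
  verts_mem : ∀ v ∈ verts, isLV v
  edges_mem : ∀ e ∈ edges, e ∈ LGraph.edgeSet
  edges_sub : ∀ e ∈ edges, ∀ v ∈ e, v ∈ verts

/-- A percolation configuration on the edges of `Ω`. -/
abbrev Cfg (Ω : FinSubL) := Ω.edges → Bool

/-- The spanning subgraph of open edges of a configuration. -/
def openGraph (Ω : FinSubL) (ω : Cfg Ω) : SimpleGraph (ℤ × ℤ) where
  Adj u v := u ≠ v ∧ ∃ e : Ω.edges, ω e = true ∧ (e : Sym2 (ℤ × ℤ)) = s(u, v)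
  symm := by
    constructor
    rintro u v ⟨huv, e, he, hev⟩
    exact ⟨huv.symm, e, he, hev.trans (Sym2.eq_swap)⟩
  loopless := ⟨fun u h => h.1 rfl⟩

/-- Wiring a graph on a set `B`: all vertices of `B` are identified (as a clique). -/
def wireGraph (G : SimpleGraph (ℤ × ℤ)) (B : Set (ℤ × ℤ)) : SimpleGraph (ℤ × ℤ) where
  Adj u v := u ≠ v ∧ (G.Adj u v ∨ (u ∈ B ∧ v ∈ B))
  symm := by
    constructor
    rintro u v ⟨huv, h | h⟩
    · exact ⟨huv.symm, Or.inl h.symm⟩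
    · exact ⟨huv.symm, Or.inr ⟨h.2, h.1⟩⟩
  loopless := ⟨fun u h => h.1 rfl⟩

/-- Number of clusters of `ω` in `Ω` (free boundary conditions). -/
def kFree (Ω : FinSubL) (ω : Cfg Ω) : ℕ :=
  Nat.card ((openGraph Ω ω).comap (Subtype.val : Ω.verts → ℤ × ℤ)).ConnectedComponent

/-- Number of clusters of `ω` in `Ω` after identifying all vertices of `B`. -/
def kWired (Ω : FinSubL) (B : Set (ℤ × ℤ)) (ω : Cfg Ω) : ℕ :=
  Nat.card
    ((wireGraph (openGraph Ω ω) B).comap (Subtype.val : Ω.verts → ℤ × ℤ)).ConnectedComponent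

/-- The boundary `∂Ω`: vertices of `Ω` adjacent in `𝕃` to a vertex outside `Ω`. -/
def bdry (Ω : FinSubL) : Set (ℤ × ℤ) :=
  {v | v ∈ Ω.verts ∧ ∃ u, LGraph.Adj v u ∧ u ∉ Ω.verts}

/-- The local ATRC edge weights for `J < U`. -/
def aWt (J U : ℝ) : Bool → Bool → ℝ
  | false, false => Real.exp (-2 * (J + U))
  | true, false => 0
  | false, true => Real.exp (-4 * J) - Real.exp (-2 * (J + U))
  | true, true => 1 - Real.exp (-4 * J)

/-- The local ATRC edge weights for `J ≥ U`. -/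
def aWt' (J U : ℝ) : Bool → Bool → ℝ
  | false, false => Real.exp (-4 * J)
  | true, false => Real.exp (-2 * (J + U)) - Real.exp (-4 * J)
  | false, true => Real.exp (-2 * (J + U)) - Real.exp (-4 * J)
  | true, true => 1 - 2 * Real.exp (-2 * (J + U)) + Real.exp (-4 * J)

/-- The (unnormalized) ATRC weight, with cluster-counting functions `k1, k2` encoding
the boundary conditions, using local weights `a`. -/
def atrcWtGen (a : Bool → Bool → ℝ) (Ω : FinSubL) (k1 k2 : Cfg Ω → ℕ)
    (ω : Cfg Ω × Cfg Ω) : ℝ :=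
  2 ^ k1 ω.1 * 2 ^ k2 ω.2 * ∏ e : Ω.edges, a (ω.1 e) (ω.2 e)

/-- ATRC probability of an event `A`, with local weights `a`. -/
def atrcProbGen (a : Bool → Bool → ℝ) (Ω : FinSubL) (k1 k2 : Cfg Ω → ℕ)
    (A : Set (Cfg Ω × Cfg Ω)) : ℝ :=
  (∑ ω : Cfg Ω × Cfg Ω, if ω ∈ A then atrcWtGen a Ω k1 k2 ω else 0) /
    (∑ ω : Cfg Ω × Cfg Ω, atrcWtGen a Ω k1 k2 ω)

/-- ATRC probability (`J < U` regime). -/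
def atrcProb (J U : ℝ) (Ω : FinSubL) (k1 k2 : Cfg Ω → ℕ) (A : Set (Cfg Ω × Cfg Ω)) : ℝ :=
  atrcProbGen (aWt J U) Ω k1 k2 A

/-- ATRC probability with wired/wired boundary conditions (`J < U` regime). -/
def atrcProb11 (J U : ℝ) (Ω : FinSubL) (A : Set (Cfg Ω × Cfg Ω)) : ℝ :=
  atrcProb J U Ω (kWired Ω (bdry Ω)) (kWired Ω (bdry Ω)) A

/-- ATRC probability with free/free boundary conditions (`J < U` regime). -/
def atrcProb00 (J U : ℝ) (Ω : FinSubL) (A : Set (Cfg Ω × Cfg Ω)) : ℝ :=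
  atrcProbGen (aWt J U) Ω (kFree Ω) (kFree Ω) A

/-- The event that `x` is connected to the set `S` by a path of `ω`-open edges. -/
def connTo (Ω : FinSubL) (ω : Cfg Ω) (x : ℤ × ℤ) (S : Set (ℤ × ℤ)) : Prop :=
  ∃ y ∈ S, (openGraph Ω ω).Reachable x y

/-- The box `Λ_n = {u ∈ 𝕃 : ‖u‖₁ ≤ 2n}`. -/
def Lbox (n : ℕ) : Finset (ℤ × ℤ) :=
  (Finset.Icc (-(2 * n : ℤ), -(2 * n : ℤ)) ((2 * n : ℤ), (2 * n : ℤ))).filter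
    fun u => isLV u ∧ u.1.natAbs + u.2.natAbs ≤ 2 * n

/-- The boundary `∂Λ_n = {u ∈ 𝕃 : ‖u‖₁ = 2n}`. -/
def LboxBdry (n : ℕ) : Set (ℤ × ℤ) := {u | isLV u ∧ u.1.natAbs + u.2.natAbs = 2 * n}

/-- `Ω` contains the vertex set `V` together with all `𝕃`-edges between its vertices. -/
def containsBox (Ω : FinSubL) (V : Finset (ℤ × ℤ)) : Prop :=
  (∀ v ∈ V, v ∈ Ω.verts) ∧
    ∀ u v : ℤ × ℤ, u ∈ V → v ∈ V → LGraph.Adj u v → s(u, v) ∈ Ω.edges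

end ATRCPaper

namespace ATRCPaper

/-- The lattice `𝕃` with the vertices of `C` removed. -/
def delGraph (C : Set (ℤ × ℤ)) : SimpleGraph (ℤ × ℤ) where
  Adj u v := LGraph.Adj u v ∧ u ∉ C ∧ v ∉ C
  symm := by
    constructor
    rintro u v ⟨h, h1, h2⟩
    exact ⟨h.symm, h2, h1⟩
  loopless := ⟨fun u h => LGraph.ne_of_adj h.1 rfl⟩

/-- A vertex of `𝕃` enclosed by the vertex set `C`: its connected component in the
complement of `C` is finite. -/
def enclosed (C : Set (ℤ × ℤ)) (u : ℤ × ℤ) : Prop :=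
  isLV u ∧ u ∉ C ∧ Set.Finite {x | (delGraph C).Reachable u x}

/-- A domain in `𝕃`: the subgraph induced by the vertices lying on or inside a simple
cycle of `𝕃` (given by the walk `cyc`). -/
structure LDomain extends FinSubL where
  base : ℤ × ℤ
  cyc : LGraph.Walk base base
  cyc_cycle : cyc.IsCycle
  verts_eq : (verts : Set (ℤ × ℤ)) =
    {x | x ∈ cyc.support} ∪ {x | enclosed {y | y ∈ cyc.support} x}
  edges_ind : ∀ u v : ℤ × ℤ, u ∈ verts → v ∈ verts → LGraph.Adj u v → s(u, v) ∈ edges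

/-- The domain-boundary `∂̄Ω`: the vertices on the boundary cycle. -/
def LDomain.dbdry (Ω : LDomain) : Set (ℤ × ℤ) := {x | x ∈ Ω.cyc.support}

/-- The edge-boundary `E_{∂̄Ω}`: the edges on the boundary cycle, as a finset. -/
def LDomain.bedges (Ω : LDomain) : Finset (Sym2 (ℤ × ℤ)) := Ω.cyc.edges.toFinset

end ATRCPaper

namespace ATRCPaper

/-- The (unnormalized) ATRC weight with general edge weights `wt` for `ω_τ` and a constant
weight `wtt` for `ω_{ττ'} ∖ ω_τ`, with free counting for `ω_τ` and counting for `ω_{ττ'}`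
wired on the domain-boundary `∂̄Ω`. -/
def atrcWWt (Ω : LDomain) (wt : Sym2 (ℤ × ℤ) → ℝ) (wtt : ℝ)
    (ω : Cfg Ω.toFinSubL × Cfg Ω.toFinSubL) : ℝ :=
  (if ∀ e : Ω.toFinSubL.edges, ω.1 e = true → ω.2 e = true then 1 else 0) *
    (∏ e : Ω.toFinSubL.edges, if ω.1 e then wt e else 1) *
    wtt ^ (Finset.univ.filter fun e : Ω.toFinSubL.edges => ω.2 e = true ∧ ω.1 e = false).card *
    2 ^ (kFree Ω.toFinSubL ω.1 + kWired Ω.toFinSubL Ω.dbdry ω.2)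

/-- The probability of an event under `ATRC^{0,𝟙}_{Ω,wt,wtt}`. -/
def atrcWProb (Ω : LDomain) (wt : Sym2 (ℤ × ℤ) → ℝ) (wtt : ℝ)
    (A : Set (Cfg Ω.toFinSubL × Cfg Ω.toFinSubL)) : ℝ :=
  (∑ ω : Cfg Ω.toFinSubL × Cfg Ω.toFinSubL, if ω ∈ A then atrcWWt Ω wt wtt ω else 0) /
    (∑ ω : Cfg Ω.toFinSubL × Cfg Ω.toFinSubL, atrcWWt Ω wt wtt ω)

/-- An increasing event on pairs of configurations. -/
def IncrPair (Ω : FinSubL) (A : Set (Cfg Ω × Cfg Ω)) : Prop :=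
  ∀ x y : Cfg Ω × Cfg Ω, x ∈ A → x.1 ≤ y.1 → x.2 ≤ y.2 → y ∈ A

end ATRCPaper

namespace ATRCPaper

open SimpleGraph Function Finset

section Graphs
variable {V : Type*}

lemma reachable_sup_edge_cases {G : SimpleGraph V} {u v x y : V}
    (h : (G ⊔ edge u v).Reachable x y) :
    G.Reachable x y ∨ (G.Reachable x u ∧ G.Reachable v y) ∨
      (G.Reachable x v ∧ G.Reachable u y) := by
  obtain ⟨w⟩ := h
  induction w with
  | nil => exact Or.inl (Reachable.refl _)
  | @cons x z y h w ih =>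
    rcases h with h | h
    · have hxz : G.Reachable x z := h.reachable
      rcases ih with h1 | ⟨h1, h2⟩ | ⟨h1, h2⟩
      · exact Or.inl (hxz.trans h1)
      · exact Or.inr (Or.inl ⟨hxz.trans h1, h2⟩)
      · exact Or.inr (Or.inr ⟨hxz.trans h1, h2⟩)
    · rw [edge_adj] at h
      obtain ⟨⟨rfl, rfl⟩ | ⟨rfl, rfl⟩, hne⟩ := h
      · rcases ih with h1 | ⟨h1, h2⟩ | ⟨h1, h2⟩
        · exact Or.inr (Or.inl ⟨Reachable.refl _, h1⟩)
        · exact Or.inr (Or.inl ⟨Reachable.refl _, h2⟩)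
        · exact Or.inl h2
      · rcases ih with h1 | ⟨h1, h2⟩ | ⟨h1, h2⟩
        · exact Or.inr (Or.inr ⟨Reachable.refl _, h1⟩)
        · exact Or.inl h2
        · exact Or.inr (Or.inr ⟨Reachable.refl _, h2⟩)

variable [Finite V]

/-- Number of connected components. -/
def kc (G : SimpleGraph V) : ℕ := Nat.card G.ConnectedComponent

lemma kc_mono {G G' : SimpleGraph V} (h : G ≤ G') : kc G' ≤ kc G := by
  apply Nat.card_le_card_of_surjective
    (ConnectedComponent.map (Hom.ofLE h))
  intro c
  refine c.ind fun v => ?_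
  exact ⟨G.connectedComponentMk v, by simp [ConnectedComponent.map_mk]⟩

lemma kc_sup_edge_eq_of_reachable {G : SimpleGraph V} {u v : V} (hr : G.Reachable u v) :
    kc (G ⊔ edge u v) = kc G := by
  refine le_antisymm (kc_mono le_sup_left) ?_
  apply Nat.card_le_card_of_injective
    (ConnectedComponent.map (Hom.ofLE (le_sup_left : G ≤ G ⊔ edge u v)))
  intro c d
  refine ConnectedComponent.ind₂ (fun p q hpq => ?_) c d
  simp only [ConnectedComponent.map_mk, Hom.ofLE_apply,
    ConnectedComponent.eq] at hpq ⊢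
  rcases reachable_sup_edge_cases hpq with h | ⟨h1, h2⟩ | ⟨h1, h2⟩
  · exact h
  · exact (h1.trans hr).trans h2
  · exact (h1.trans hr.symm).trans h2

lemma kc_le_kc_sup_edge_add_one (G : SimpleGraph V) (u v : V) :
    kc G ≤ kc (G ⊔ edge u v) + 1 := by
  classical
  set f := ConnectedComponent.map
    (Hom.ofLE (le_sup_left : G ≤ G ⊔ edge u v)) with hf
  have hinj : Function.Injective (fun c : G.ConnectedComponent =>
      if c = G.connectedComponentMk v then (Sum.inr () : (G ⊔ edge u v).ConnectedComponent ⊕ Unit)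
      else Sum.inl (f c)) := by
    intro c d h
    dsimp only at h
    by_cases h1 : c = G.connectedComponentMk v <;> by_cases h2 : d = G.connectedComponentMk v
    · exact h1.trans h2.symm
    · rw [if_pos h1, if_neg h2] at h; exact absurd h (by simp)
    · rw [if_neg h1, if_pos h2] at h; exact absurd h (by simp)
    · rw [if_neg h1, if_neg h2] at h
      simp only [Sum.inl.injEq] at h
      revert h1 h2 h
      refine ConnectedComponent.ind₂ (fun p q => ?_) c d
      intro h1 h2 h
      simp only [hf, ConnectedComponent.map_mk, Hom.ofLE_apply,
        ConnectedComponent.eq] at h ⊢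
      rcases reachable_sup_edge_cases h with h' | ⟨ha, hb⟩ | ⟨ha, hb⟩
      · exact h'
      · exact absurd (ConnectedComponent.sound hb.symm) h2
      · exact absurd (ConnectedComponent.sound ha) h1
  calc kc G ≤ Nat.card ((G ⊔ edge u v).ConnectedComponent ⊕ Unit) :=
        Nat.card_le_card_of_injective _ hinj
    _ = kc (G ⊔ edge u v) + 1 := by simp [Nat.card_sum, kc]

lemma kc_sup_edge_lt_of_not_reachable {G : SimpleGraph V} {u v : V} (hne : u ≠ v)
    (hnr : ¬ G.Reachable u v) : kc (G ⊔ edge u v) < kc G := by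
  classical
  letI : Fintype G.ConnectedComponent := Fintype.ofFinite _
  letI : Fintype (G ⊔ edge u v).ConnectedComponent := Fintype.ofFinite _
  rw [kc, kc, Nat.card_eq_fintype_card, Nat.card_eq_fintype_card]
  set f := ConnectedComponent.map
    (Hom.ofLE (le_sup_left : G ≤ G ⊔ edge u v)) with hf
  apply Fintype.card_lt_of_surjective_not_injective f
  · intro c
    refine c.ind fun p => ?_
    exact ⟨G.connectedComponentMk p, by simp [hf, ConnectedComponent.map_mk]⟩
  · intro hinjf
    have hadj : (G ⊔ edge u v).Adj u v := Or.inr ((edge_adj u v u v).2 ⟨Or.inl ⟨rfl, rfl⟩, hne⟩)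
    have : f (G.connectedComponentMk u) = f (G.connectedComponentMk v) := by
      simp only [hf, ConnectedComponent.map_mk, Hom.ofLE_apply]
      exact ConnectedComponent.sound hadj.reachable
    exact hnr (ConnectedComponent.eq.mp (hinjf this))

lemma kc_one_edge {G G' : SimpleGraph V} (hle : G ≤ G') {u v : V} (hne : u ≠ v) :
    kc (G ⊔ edge u v) + kc G' ≤ kc G + kc (G' ⊔ edge u v) := by
  by_cases hr : G.Reachable u v
  · rw [kc_sup_edge_eq_of_reachable hr, kc_sup_edge_eq_of_reachable (hr.mono hle)]
  · have h1 := kc_sup_edge_lt_of_not_reachable hne hr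
    have h2 := kc_le_kc_sup_edge_add_one G' u v
    omega

end Graphs
section Config
variable (Ω : FinSubL)

lemma openGraph_mono {ρ σ : Cfg Ω} (h : ρ ≤ σ) : openGraph Ω ρ ≤ openGraph Ω σ := by
  rintro u v ⟨hne, e, he, hev⟩
  exact ⟨hne, e, Bool.le_iff_imp.mp (h e) he, hev⟩

lemma wireGraph_mono {G G' : SimpleGraph (ℤ × ℤ)} (h : G ≤ G') (B : Set (ℤ × ℤ)) :
    wireGraph G B ≤ wireGraph G' B := by
  rintro u v ⟨hne, hadj | hB⟩
  · exact ⟨hne, Or.inl (h hadj)⟩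
  · exact ⟨hne, Or.inr hB⟩

lemma openGraph_update (ρ : Cfg Ω) (e0 : Ω.edges) {a b : ℤ × ℤ}
    (hab : (e0 : Sym2 (ℤ × ℤ)) = s(a, b)) (hne : a ≠ b) :
    openGraph Ω (Function.update ρ e0 true) = openGraph Ω ρ ⊔ SimpleGraph.edge a b := by
  ext u v
  rw [sup_adj]
  constructor
  · rintro ⟨huv, e, he, hev⟩
    by_cases heq : e = e0
    · subst heq
      rw [hab] at hev
      rw [Sym2.eq_iff] at hev
      refine Or.inr ((edge_adj a b u v).2 ⟨?_, huv⟩)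
      rcases hev with ⟨rfl, rfl⟩ | ⟨rfl, rfl⟩
      · exact Or.inl ⟨rfl, rfl⟩
      · exact Or.inr ⟨rfl, rfl⟩
    · rw [Function.update_apply] at he
      rw [if_neg heq] at he
      exact Or.inl ⟨huv, e, he, hev⟩
  · rintro (⟨huv, e, he, hev⟩ | hE)
    · refine ⟨huv, e, ?_, hev⟩
      rw [Function.update_apply]
      split_ifs <;> simp [he]
    · rw [edge_adj] at hE
      refine ⟨hE.2, e0, by simp [Function.update_apply], ?_⟩
      rw [hab]
      rcases hE.1 with ⟨rfl, rfl⟩ | ⟨rfl, rfl⟩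
      · rfl
      · exact Sym2.eq_swap

lemma wireGraph_sup_edge (G : SimpleGraph (ℤ × ℤ)) (B : Set (ℤ × ℤ)) {a b : ℤ × ℤ} :
    wireGraph (G ⊔ SimpleGraph.edge a b) B = wireGraph G B ⊔ SimpleGraph.edge a b := by
  ext u v
  rw [sup_adj]
  constructor
  · rintro ⟨huv, (h | h) | hB⟩
    · exact Or.inl ⟨huv, Or.inl h⟩
    · exact Or.inr h
    · exact Or.inl ⟨huv, Or.inr hB⟩
  · rintro (⟨huv, h | hB⟩ | h)
    · exact ⟨huv, Or.inl (Or.inl h)⟩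
    · exact ⟨huv, Or.inr hB⟩
    · exact ⟨((edge_adj a b u v).1 h).2, Or.inl (Or.inr h)⟩

lemma comap_sup' {α β : Type*} (G H : SimpleGraph β) (f : α → β) :
    (G ⊔ H).comap f = G.comap f ⊔ H.comap f := rfl

lemma comap_edge' {α β : Type*} (f : α → β) (hinj : Function.Injective f) (a b : α) :
    (SimpleGraph.edge (f a) (f b)).comap f = SimpleGraph.edge a b := by
  ext x y
  rw [comap_adj, edge_adj, edge_adj, hinj.ne_iff, hinj.eq_iff, hinj.eq_iff, hinj.eq_iff,
    hinj.eq_iff]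

lemma exists_endpoints (e0 : Ω.edges) : ∃ a b : ℤ × ℤ, a ≠ b ∧
    a ∈ Ω.verts ∧ b ∈ Ω.verts ∧ (e0 : Sym2 (ℤ × ℤ)) = s(a, b) := by
  have hmem := Ω.edges_mem e0 e0.2
  have hab : ∃ a b : ℤ × ℤ, (e0 : Sym2 (ℤ × ℤ)) = s(a, b) := by
    induction (e0 : Sym2 (ℤ × ℤ)) using Sym2.ind with
    | _ x y => exact ⟨x, y, rfl⟩
  obtain ⟨a, b, hab⟩ := hab
  rw [hab] at hmem
  have hadj : LGraph.Adj a b := hmem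
  refine ⟨a, b, hadj.ne, ?_, ?_, hab⟩
  · exact Ω.edges_sub e0 e0.2 a (by rw [hab]; simp)
  · exact Ω.edges_sub e0 e0.2 b (by rw [hab]; simp)

lemma kFree_one_edge {ρ σ : Cfg Ω} (h : ρ ≤ σ) (e0 : Ω.edges) :
    kFree Ω (Function.update ρ e0 true) + kFree Ω σ ≤
      kFree Ω ρ + kFree Ω (Function.update σ e0 true) := by
  obtain ⟨a, b, hne, haV, hbV, hab⟩ := exists_endpoints Ω e0
  set ua : Ω.verts := ⟨a, haV⟩
  set ub : Ω.verts := ⟨b, hbV⟩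
  have hne' : ua ≠ ub := fun hh => hne (congrArg Subtype.val hh)
  have key : ∀ τ : Cfg Ω,
      (openGraph Ω (Function.update τ e0 true)).comap (Subtype.val : Ω.verts → ℤ × ℤ) =
        (openGraph Ω τ).comap (Subtype.val : Ω.verts → ℤ × ℤ) ⊔ SimpleGraph.edge ua ub := by
    intro τ
    rw [openGraph_update Ω τ e0 hab hne, comap_sup',
      ← comap_edge' (Subtype.val : Ω.verts → ℤ × ℤ) Subtype.val_injective ua ub]
  unfold kFree
  rw [key ρ, key σ]
  refine kc_one_edge (G := (openGraph Ω ρ).comap (Subtype.val : Ω.verts → ℤ × ℤ))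
    (G' := (openGraph Ω σ).comap (Subtype.val : Ω.verts → ℤ × ℤ)) ?_ hne'
  intro x y hxy
  exact openGraph_mono Ω h hxy

lemma kWired_one_edge (B : Set (ℤ × ℤ)) {ρ σ : Cfg Ω} (h : ρ ≤ σ) (e0 : Ω.edges) :
    kWired Ω B (Function.update ρ e0 true) + kWired Ω B σ ≤
      kWired Ω B ρ + kWired Ω B (Function.update σ e0 true) := by
  obtain ⟨a, b, hne, haV, hbV, hab⟩ := exists_endpoints Ω e0
  set ua : Ω.verts := ⟨a, haV⟩
  set ub : Ω.verts := ⟨b, hbV⟩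
  have hne' : ua ≠ ub := fun hh => hne (congrArg Subtype.val hh)
  have key : ∀ τ : Cfg Ω,
      (wireGraph (openGraph Ω (Function.update τ e0 true)) B).comap
          (Subtype.val : Ω.verts → ℤ × ℤ) =
        (wireGraph (openGraph Ω τ) B).comap (Subtype.val : Ω.verts → ℤ × ℤ) ⊔
          SimpleGraph.edge ua ub := by
    intro τ
    rw [openGraph_update Ω τ e0 hab hne, wireGraph_sup_edge, comap_sup',
      ← comap_edge' (Subtype.val : Ω.verts → ℤ × ℤ) Subtype.val_injective ua ub]
  unfold kWired
  rw [key ρ, key σ]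
  refine kc_one_edge (G := (wireGraph (openGraph Ω ρ) B).comap (Subtype.val : Ω.verts → ℤ × ℤ))
    (G' := (wireGraph (openGraph Ω σ) B).comap (Subtype.val : Ω.verts → ℤ × ℤ)) ?_ hne'
  intro x y hxy
  exact wireGraph_mono (openGraph_mono Ω h) B hxy

end Config
lemma bool_inf_and (x y : Bool) : x ⊓ y = (x && y) := by
  cases x <;> cases y <;> decide

lemma bool_sup_or (x y : Bool) : x ⊔ y = (x || y) := by
  cases x <;> cases y <;> decide

section Supermod
variable (Ω : FinSubL)

lemma supermod_aux (k : Cfg Ω → ℕ)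
    (hk : ∀ ρ σ : Cfg Ω, ρ ≤ σ → ∀ e0 : Ω.edges,
      k (Function.update ρ e0 true) + k σ ≤ k ρ + k (Function.update σ e0 true)) :
    ∀ (n : ℕ) (ω η : Cfg Ω),
      (Finset.univ.filter fun e => ω e = true ∧ η e = false).card = n →
      k ω + k η ≤ k (ω ⊔ η) + k (ω ⊓ η) := by
  intro n
  induction n with
  | zero =>
    intro ω η hcard
    have hle : ω ≤ η := by
      intro e
      rw [Bool.le_iff_imp]
      intro he
      by_contra hne
      have hmem : e ∈ Finset.univ.filter fun e => ω e = true ∧ η e = false :=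
        Finset.mem_filter.2 ⟨Finset.mem_univ _, he, by simpa using hne⟩
      rw [Finset.card_eq_zero] at hcard
      rw [hcard] at hmem
      exact absurd hmem (Finset.notMem_empty _)
    rw [sup_eq_right.2 hle, inf_eq_left.2 hle]
    omega
  | succ n ih =>
    intro ω η hcard
    have hnonempty : (Finset.univ.filter fun e => ω e = true ∧ η e = false).Nonempty := by
      rw [← Finset.card_pos, hcard]; omega
    obtain ⟨e0, he0⟩ := hnonempty
    rw [Finset.mem_filter] at he0
    obtain ⟨-, hω0, hη0⟩ := he0
    set η' := Function.update η e0 true with hη'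
    have hfilter : (Finset.univ.filter fun e => ω e = true ∧ η' e = false) =
        (Finset.univ.filter fun e => ω e = true ∧ η e = false).erase e0 := by
      ext e
      simp only [Finset.mem_erase, Finset.mem_filter, Finset.mem_univ, true_and, hη',
        Function.update_apply]
      by_cases heq : e = e0
      · simp [heq]
      · simp [heq]
    have hcard' : (Finset.univ.filter fun e => ω e = true ∧ η' e = false).card = n := by
      rw [hfilter, Finset.card_erase_of_mem
        (Finset.mem_filter.2 ⟨Finset.mem_univ _, hω0, hη0⟩), hcard]
      omega
    have hIH := ih ω η' hcard'
    have hOE := hk (ω ⊓ η) η inf_le_right e0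
    have idA : Function.update (ω ⊓ η) e0 true = ω ⊓ η' := by
      funext e
      rw [Function.update_apply]
      show _ = ω e ⊓ η' e
      by_cases heq : e = e0
      · subst heq
        simp [hη', Function.update_self, bool_inf_and, hω0]
      · simp [heq, hη', Function.update_apply, bool_inf_and]
    have idB : ω ⊔ η' = ω ⊔ η := by
      funext e
      show ω e ⊔ η' e = ω e ⊔ η e
      by_cases heq : e = e0
      · subst heq
        simp [hη', Function.update_self, bool_sup_or, hω0, hη0]
      · simp [heq, hη', Function.update_apply]
    rw [← hη'] at hOE
    rw [idA] at hOE
    rw [idB] at hIH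
    omega

lemma kFree_supermod (ω η : Cfg Ω) :
    kFree Ω ω + kFree Ω η ≤ kFree Ω (ω ⊔ η) + kFree Ω (ω ⊓ η) :=
  supermod_aux Ω (kFree Ω) (fun _ _ h e0 => kFree_one_edge Ω h e0) _ ω η rfl

lemma kWired_supermod (B : Set (ℤ × ℤ)) (ω η : Cfg Ω) :
    kWired Ω B ω + kWired Ω B η ≤ kWired Ω B (ω ⊔ η) + kWired Ω B (ω ⊓ η) :=
  supermod_aux Ω (kWired Ω B) (fun _ _ h e0 => kWired_one_edge Ω B h e0) _ ω η rfl

end Supermod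
section Weights
variable (Ω : LDomain)

lemma count_helper (x1 x2 y1 y2 : Bool) (hx : x1 = true → x2 = true)
    (hy : y1 = true → y2 = true) :
    ((if (x2 ⊓ y2) = true ∧ (x1 ⊓ y1) = false then 1 else 0 : ℕ) +
      if (x2 ⊔ y2) = true ∧ (x1 ⊔ y1) = false then 1 else 0) =
      ((if x2 = true ∧ x1 = false then 1 else 0 : ℕ) +
        if y2 = true ∧ y1 = false then 1 else 0) := by
  revert hx hy
  cases x1 <;> cases x2 <;> cases y1 <;> cases y2 <;> decide

lemma atrcWWt_nonneg {wt : Sym2 (ℤ × ℤ) → ℝ} {wtt : ℝ}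
    (hwt : ∀ e ∈ Ω.toFinSubL.edges, 0 ≤ wt e) (hwtt : 0 ≤ wtt)
    (ω : Cfg Ω.toFinSubL × Cfg Ω.toFinSubL) : 0 ≤ atrcWWt Ω wt wtt ω := by
  unfold atrcWWt
  refine mul_nonneg (mul_nonneg (mul_nonneg ?_ ?_) ?_) ?_
  · split_ifs <;> norm_num
  · refine Finset.prod_nonneg fun e _ => ?_
    split_ifs
    · exact hwt e e.2
    · norm_num
  · exact pow_nonneg hwtt _
  · positivity

lemma atrcWWt_holley {wt wt' : Sym2 (ℤ × ℤ) → ℝ} {wtt : ℝ} (hwtt : 0 < wtt)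
    (hpos : ∀ e ∈ Ω.toFinSubL.edges, 0 < wt e)
    (hpos' : ∀ e ∈ Ω.toFinSubL.edges, 0 < wt' e)
    (hle : ∀ e ∈ Ω.toFinSubL.edges, wt e ≤ wt' e)
    (a b : Cfg Ω.toFinSubL × Cfg Ω.toFinSubL) :
    atrcWWt Ω wt wtt a * atrcWWt Ω wt' wtt b ≤
      atrcWWt Ω wt wtt (a ⊓ b) * atrcWWt Ω wt' wtt (a ⊔ b) := by
  by_cases hIa : ∀ e : Ω.toFinSubL.edges, a.1 e = true → a.2 e = true
  swap
  · have hz : atrcWWt Ω wt wtt a = 0 := by rw [atrcWWt, if_neg hIa]; ring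
    rw [hz, zero_mul]
    exact mul_nonneg (atrcWWt_nonneg Ω (fun e he => (hpos e he).le) hwtt.le _)
      (atrcWWt_nonneg Ω (fun e he => (hpos' e he).le) hwtt.le _)
  by_cases hIb : ∀ e : Ω.toFinSubL.edges, b.1 e = true → b.2 e = true
  swap
  · have hz : atrcWWt Ω wt' wtt b = 0 := by rw [atrcWWt, if_neg hIb]; ring
    rw [hz, mul_zero]
    exact mul_nonneg (atrcWWt_nonneg Ω (fun e he => (hpos e he).le) hwtt.le _)
      (atrcWWt_nonneg Ω (fun e he => (hpos' e he).le) hwtt.le _)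
  have hIinf : ∀ e : Ω.toFinSubL.edges, (a ⊓ b).1 e = true → (a ⊓ b).2 e = true := by
    intro e h
    have h' : (a.1 e && b.1 e) = true := by rw [← bool_inf_and]; exact h
    rw [Bool.and_eq_true] at h'
    show (a.2 e ⊓ b.2 e) = true
    rw [bool_inf_and, Bool.and_eq_true]
    exact ⟨hIa e h'.1, hIb e h'.2⟩
  have hIsup : ∀ e : Ω.toFinSubL.edges, (a ⊔ b).1 e = true → (a ⊔ b).2 e = true := by
    intro e h
    have h' : (a.1 e || b.1 e) = true := by rw [← bool_sup_or]; exact h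
    rw [Bool.or_eq_true] at h'
    show (a.2 e ⊔ b.2 e) = true
    rw [bool_sup_or, Bool.or_eq_true]
    rcases h' with h' | h'
    · exact Or.inl (hIa e h')
    · exact Or.inr (hIb e h')
  -- abbreviations
  set Pa := ∏ e : Ω.toFinSubL.edges, if a.1 e then wt e else 1 with hPa
  set Pb := ∏ e : Ω.toFinSubL.edges, if b.1 e then wt' e else 1 with hPb
  set Pi := ∏ e : Ω.toFinSubL.edges, if (a ⊓ b).1 e then wt e else 1 with hPi
  set Ps := ∏ e : Ω.toFinSubL.edges, if (a ⊔ b).1 e then wt' e else 1 with hPs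
  set Na := (Finset.univ.filter fun e : Ω.toFinSubL.edges =>
    a.2 e = true ∧ a.1 e = false).card with hNa
  set Nb := (Finset.univ.filter fun e : Ω.toFinSubL.edges =>
    b.2 e = true ∧ b.1 e = false).card with hNb
  set Ni := (Finset.univ.filter fun e : Ω.toFinSubL.edges =>
    (a ⊓ b).2 e = true ∧ (a ⊓ b).1 e = false).card with hNi
  set Ns := (Finset.univ.filter fun e : Ω.toFinSubL.edges =>
    (a ⊔ b).2 e = true ∧ (a ⊔ b).1 e = false).card with hNs
  set Ka := kFree Ω.toFinSubL a.1 + kWired Ω.toFinSubL Ω.dbdry a.2 with hKa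
  set Kb := kFree Ω.toFinSubL b.1 + kWired Ω.toFinSubL Ω.dbdry b.2 with hKb
  set Ki := kFree Ω.toFinSubL (a ⊓ b).1 + kWired Ω.toFinSubL Ω.dbdry (a ⊓ b).2 with hKi
  set Ks := kFree Ω.toFinSubL (a ⊔ b).1 + kWired Ω.toFinSubL Ω.dbdry (a ⊔ b).2 with hKs
  have hPa0 : 0 ≤ Pa := by
    rw [hPa]; refine Finset.prod_nonneg fun e _ => ?_
    split_ifs
    · exact (hpos e e.2).le
    · norm_num
  have hPs0 : 0 ≤ Ps := by
    rw [hPs]; refine Finset.prod_nonneg fun e _ => ?_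
    split_ifs
    · exact (hpos' e e.2).le
    · norm_num
  have hPi0 : 0 ≤ Pi := by
    rw [hPi]; refine Finset.prod_nonneg fun e _ => ?_
    split_ifs
    · exact (hpos e e.2).le
    · norm_num
  -- product inequality
  have hP : Pa * Pb ≤ Pi * Ps := by
    rw [hPa, hPb, hPi, hPs, ← Finset.prod_mul_distrib, ← Finset.prod_mul_distrib]
    refine Finset.prod_le_prod (fun e _ => ?_) (fun e _ => ?_)
    · refine mul_nonneg ?_ ?_ <;> split_ifs
      · exact (hpos e e.2).le
      · norm_num
      · exact (hpos' e e.2).le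
      · norm_num
    · show (if a.1 e then wt e.1 else 1) * (if b.1 e then wt' e.1 else 1) ≤
        (if (a.1 e ⊓ b.1 e : Bool) then wt e.1 else 1) *
          (if (a.1 e ⊔ b.1 e : Bool) then wt' e.1 else 1)
      cases ha : a.1 e <;> cases hb : b.1 e <;>
        simp only [bool_inf_and, bool_sup_or, Bool.and_self, Bool.or_self, Bool.and_false,
          Bool.false_and, Bool.and_true, Bool.true_and, Bool.or_false, Bool.false_or,
          Bool.or_true, Bool.true_or, if_true, if_false, Bool.false_eq_true, one_mul, mul_one]
      · exact le_refl 1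
      · exact le_refl (wt' e.1)
      · exact hle e.1 e.2
      · exact le_refl (wt e.1 * wt' e.1)
  -- exponent equality for wtt
  have hN : Ni + Ns = Na + Nb := by
    rw [hNa, hNb, hNi, hNs, Finset.card_filter, Finset.card_filter, Finset.card_filter,
      Finset.card_filter, ← Finset.sum_add_distrib, ← Finset.sum_add_distrib]
    refine Finset.sum_congr rfl fun e _ => ?_
    exact count_helper (a.1 e) (a.2 e) (b.1 e) (b.2 e) (hIa e) (hIb e)
  -- cluster count inequality
  have hK : Ka + Kb ≤ Ki + Ks := by
    have h1 := kFree_supermod Ω.toFinSubL a.1 b.1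
    have h2 := kWired_supermod Ω.toFinSubL Ω.dbdry a.2 b.2
    have e1 : (a ⊓ b).1 = a.1 ⊓ b.1 := rfl
    have e2 : (a ⊓ b).2 = a.2 ⊓ b.2 := rfl
    have e3 : (a ⊔ b).1 = a.1 ⊔ b.1 := rfl
    have e4 : (a ⊔ b).2 = a.2 ⊔ b.2 := rfl
    rw [hKa, hKb, hKi, hKs, e1, e2, e3, e4]
    omega
  rw [atrcWWt, atrcWWt, atrcWWt, atrcWWt, if_pos hIa, if_pos hIb, if_pos hIinf, if_pos hIsup,
    ← hPa, ← hPb, ← hPi, ← hPs, ← hNa, ← hNb, ← hNi, ← hNs, ← hKa, ← hKb, ← hKi, ← hKs]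
  calc 1 * Pa * wtt ^ Na * 2 ^ Ka * (1 * Pb * wtt ^ Nb * 2 ^ Kb)
      = Pa * Pb * wtt ^ (Na + Nb) * (2 : ℝ) ^ (Ka + Kb) := by
        rw [pow_add, pow_add]; ring
    _ ≤ Pi * Ps * wtt ^ (Na + Nb) * (2 : ℝ) ^ (Ki + Ks) := by
        refine mul_le_mul (mul_le_mul hP le_rfl (pow_nonneg hwtt.le _)
          (mul_nonneg hPi0 hPs0)) (pow_le_pow_right₀ one_le_two hK)
          (pow_nonneg (by norm_num) _)
          (mul_nonneg (mul_nonneg hPi0 hPs0) (pow_nonneg hwtt.le _))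
    _ = 1 * Pi * wtt ^ Ni * 2 ^ Ki * (1 * Ps * wtt ^ Ns * 2 ^ Ks) := by
        rw [← hN, pow_add, pow_add]; ring

end Weights
/-- The measure `ATRC^{0,𝟙}_{Ω,w_τ,w_{ττ'}}` is stochastically
increasing in the edge weights `w_τ`. -/
theorem atrc_stoch_dom_in_wtau (Ω : LDomain) (wtt : ℝ) (hwtt : 0 < wtt)
    (wt wt' : Sym2 (ℤ × ℤ) → ℝ)
    (hpos : ∀ e ∈ Ω.toFinSubL.edges, 0 < wt e)
    (hpos' : ∀ e ∈ Ω.toFinSubL.edges, 0 < wt' e)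
    (hle : ∀ e ∈ Ω.toFinSubL.edges, wt e ≤ wt' e) :
    ∀ A : Set (Cfg Ω.toFinSubL × Cfg Ω.toFinSubL), IncrPair Ω.toFinSubL A →
      atrcWProb Ω wt wtt A ≤ atrcWProb Ω wt' wtt A := by
  intro A hA
  classical
  have hW0 : ∀ ω, 0 ≤ atrcWWt Ω wt wtt ω :=
    atrcWWt_nonneg Ω (fun e he => (hpos e he).le) hwtt.le
  have hW'0 : ∀ ω, 0 ≤ atrcWWt Ω wt' wtt ω :=
    atrcWWt_nonneg Ω (fun e he => (hpos' e he).le) hwtt.le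
  have hterm : ∀ w : Sym2 (ℤ × ℤ) → ℝ,
      0 < atrcWWt Ω w wtt ((fun _ => false, fun _ => false) :
        Cfg Ω.toFinSubL × Cfg Ω.toFinSubL) := by
    intro w
    rw [atrcWWt, if_pos (fun _ h => h)]
    simp only [Bool.false_eq_true, if_false, Finset.prod_const_one, false_and,
      Finset.filter_false, Finset.card_empty, pow_zero]
    positivity
  have hD : 0 < ∑ ω : Cfg Ω.toFinSubL × Cfg Ω.toFinSubL, atrcWWt Ω wt wtt ω :=
    Finset.sum_pos' (fun ω _ => hW0 ω) ⟨_, Finset.mem_univ _, hterm wt⟩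
  have hD' : 0 < ∑ ω : Cfg Ω.toFinSubL × Cfg Ω.toFinSubL, atrcWWt Ω wt' wtt ω :=
    Finset.sum_pos' (fun ω _ => hW'0 ω) ⟨_, Finset.mem_univ _, hterm wt'⟩
  unfold atrcWProb
  rw [div_le_div_iff₀ hD hD']
  have h4 := four_functions_theorem_univ
    (fun ω => if ω ∈ A then atrcWWt Ω wt wtt ω else 0)
    (atrcWWt Ω wt' wtt) (atrcWWt Ω wt wtt)
    (fun ω => if ω ∈ A then atrcWWt Ω wt' wtt ω else 0)
    (fun ω => by dsimp; split_ifs; exacts [hW0 ω, le_rfl])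
    (fun ω => hW'0 ω) (fun ω => hW0 ω)
    (fun ω => by dsimp; split_ifs; exacts [hW'0 ω, le_rfl])
    (fun x y => by
      by_cases hx : x ∈ A
      · have hxs : x ⊔ y ∈ A :=
          hA x (x ⊔ y) hx (Prod.le_def.mp le_sup_left).1 (Prod.le_def.mp le_sup_left).2
        rw [if_pos hx, if_pos hxs]
        exact atrcWWt_holley Ω hwtt hpos hpos' hle x y
      · rw [if_neg hx, zero_mul]
        refine mul_nonneg (hW0 _) ?_
        split_ifs
        exacts [hW'0 _, le_rfl])
  exact h4.trans_eq (mul_comm _ _)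

end ATRCPaper
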